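/- Let D be a state divergence (a map assigning to every pair of density matrices on any finite-dimensional system an extended real number, satisfying the data processing inequality D(E(ρ)‖E(σ)) ≤ D(ρ‖σ) for every quantum channel E) that is additive under tensor products: D(ρ₁⊗ρ₂ ‖ σ₁⊗σ₂) = D(ρ₁‖σ₁) + D(ρ₂‖σ₂). Then for all quantum channels N₁, M₁ from matrices on A₁ to matrices on B₁ and N₂, M₂ from matrices on A₂ to matrices on B₂, the amortized channel divergence is additive: D^A(N₁⊗N₂ ‖ M₁⊗M₂) = D^A(N₁‖M₁) + D^A(N₂‖M₂). -/

import Mathlib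

open scoped Kronecker ComplexOrder Classical

noncomputable section

/-- Square complex matrices indexed by `ι`. -/
abbrev MatC (ι : Type*) := Matrix ι ι ℂ

/-- A density matrix: positive semidefinite with trace one. -/
def IsDensity {ι : Type*} [Fintype ι] (ρ : MatC ι) : Prop :=
  ρ.PosSemidef ∧ ρ.trace = 1

/-- Functional calculus for Hermitian matrices (junk value `0` otherwise). -/
def funCalc {ι : Type*} [Fintype ι] [DecidableEq ι] (X : MatC ι) (f : ℝ → ℝ) : MatC ι :=
  if hX : X.IsHermitian then
    (hX.eigenvectorUnitary : MatC ι) * Matrix.diagonal (fun i => (f (hX.eigenvalues i) : ℂ)) *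
      star (hX.eigenvectorUnitary : MatC ι)
  else 0

/-- Real matrix power by functional calculus, with the convention `0 ^ t = 0`
(powers taken on the support). -/
def matPow {ι : Type*} [Fintype ι] [DecidableEq ι] (X : MatC ι) (t : ℝ) : MatC ι :=
  funCalc X fun x => if x ≤ 0 then 0 else Real.rpow x t

/-- Base-2 matrix logarithm by functional calculus on the support. -/
def matLog2 {ι : Type*} [Fintype ι] [DecidableEq ι] (X : MatC ι) : MatC ι :=
  funCalc X fun x => if x ≤ 0 then 0 else Real.logb 2 x

/-- Trace of the positive part of a Hermitian matrix: the sum of its nonnegative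
eigenvalues (junk value `0` for non-Hermitian input). -/
def trPos {ι : Type*} [Fintype ι] [DecidableEq ι] (X : MatC ι) : ℝ :=
  if hX : X.IsHermitian then ∑ i, max (hX.eigenvalues i) 0 else 0

/-- Largest eigenvalue (operator norm for PSD matrices). -/
def maxEig {ι : Type*} [Fintype ι] [DecidableEq ι] (X : MatC ι) : ℝ :=
  if hX : X.IsHermitian then ⨆ i, hX.eigenvalues i else 0

/-- Support inclusion `supp ρ ⊆ supp σ`, expressed via kernels. -/
def SuppLe {ι : Type*} [Fintype ι] (ρ σ : MatC ι) : Prop :=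
  ∀ v : ι → ℂ, σ.mulVec v = 0 → ρ.mulVec v = 0

/-- `−log₂` with the convention `−log₂ 0 = +∞`, valued in extended reals. -/
def negLog2 (x : ℝ) : EReal := if x ≤ 0 then ⊤ else ((-Real.logb 2 x : ℝ) : EReal)

/-- `log₂` with the convention `log₂ 0 = −∞`, valued in extended reals. -/
def elog2 (x : ℝ) : EReal := if x ≤ 0 then ⊥ else ((Real.logb 2 x : ℝ) : EReal)

/-! ### Channels -/

/-- The Kronecker extension `id_R ⊗ N` of a linear map on matrices. -/
def idTensor (R : Type*) {A B : Type*} (N : MatC A →ₗ[ℂ] MatC B) :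
    MatC (R × A) →ₗ[ℂ] MatC (R × B) where
  toFun X := Matrix.of fun p q => N (Matrix.of fun a a' => X (p.1, a) (q.1, a')) p.2 q.2
  map_add' X Y := by
    ext p q
    show N (Matrix.of fun a a' => (X + Y) (p.1, a) (q.1, a')) p.2 q.2 = _
    have h : (Matrix.of fun a a' => (X + Y) (p.1, a) (q.1, a'))
        = (Matrix.of fun a a' => X (p.1, a) (q.1, a'))
          + (Matrix.of fun a a' => Y (p.1, a) (q.1, a')) := rfl
    rw [h, map_add]; rfl
  map_smul' c X := by
    ext p q
    show N (Matrix.of fun a a' => (c • X) (p.1, a) (q.1, a')) p.2 q.2 = _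
    have h : (Matrix.of fun a a' => (c • X) (p.1, a) (q.1, a'))
        = c • (Matrix.of fun a a' => X (p.1, a) (q.1, a')) := rfl
    rw [h, map_smul]; rfl

/-- The Kronecker extension `N ⊗ id_R`. -/
def tensorId (R : Type*) {A B : Type*} (N : MatC A →ₗ[ℂ] MatC B) :
    MatC (A × R) →ₗ[ℂ] MatC (B × R) where
  toFun X := Matrix.of fun p q => N (Matrix.of fun a a' => X (a, p.2) (a', q.2)) p.1 q.1
  map_add' X Y := by
    ext p q
    show N (Matrix.of fun a a' => (X + Y) (a, p.2) (a', q.2)) p.1 q.1 = _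
    have h : (Matrix.of fun a a' => (X + Y) (a, p.2) (a', q.2))
        = (Matrix.of fun a a' => X (a, p.2) (a', q.2))
          + (Matrix.of fun a a' => Y (a, p.2) (a', q.2)) := rfl
    rw [h, map_add]; rfl
  map_smul' c X := by
    ext p q
    show N (Matrix.of fun a a' => (c • X) (a, p.2) (a', q.2)) p.1 q.1 = _
    have h : (Matrix.of fun a a' => (c • X) (a, p.2) (a', q.2))
        = c • (Matrix.of fun a a' => X (a, p.2) (a', q.2)) := rfl
    rw [h, map_smul]; rfl

/-- Transport of a matrix map along equivalences of index types. -/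
def reindexChan {A A' B B' : Type*} (eA : A ≃ A') (eB : B ≃ B')
    (N : MatC A →ₗ[ℂ] MatC B) : MatC A' →ₗ[ℂ] MatC B' :=
  (Matrix.reindexLinearEquiv ℂ ℂ eB eB).toLinearMap ∘ₗ N ∘ₗ
    (Matrix.reindexLinearEquiv ℂ ℂ eA.symm eA.symm).toLinearMap

/-- The tensor product `N ⊗ M` of two matrix maps. -/
def tensorChan {A B C D : Type*} (N : MatC A →ₗ[ℂ] MatC B) (M : MatC C →ₗ[ℂ] MatC D) :
    MatC (A × C) →ₗ[ℂ] MatC (B × D) :=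
  tensorId D N ∘ₗ idTensor A M

/-- The `n`-fold tensor power `N^{⊗n}` of a matrix map, acting on matrices
indexed by `Fin n → A`. -/
def powChan {A B : Type*} (N : MatC A →ₗ[ℂ] MatC B) :
    (n : ℕ) → (MatC (Fin n → A) →ₗ[ℂ] MatC (Fin n → B))
  | 0 => reindexChan (Equiv.refl _) (Equiv.ofUnique (Fin 0 → A) (Fin 0 → B)) LinearMap.id
  | n + 1 =>
      reindexChan (Fin.insertNthEquiv (fun _ => A) 0) (Fin.insertNthEquiv (fun _ => B) 0)
        (tensorChan N (powChan N n))

/-- Complete positivity and trace preservation (a quantum channel). -/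
def IsCPTP {A B : Type*} [Fintype A] [Fintype B] (N : MatC A →ₗ[ℂ] MatC B) : Prop :=
  (∀ (R : Type) (fR : Fintype R) (X : MatC (R × A)),
      letI := fR
      X.PosSemidef → (idTensor R N X).PosSemidef) ∧
    ∀ X : MatC A, (N X).trace = X.trace

/-- The (unnormalized) maximally entangled projector `|Φ⟩⟨Φ|`. -/
def maxEnt (A : Type*) [DecidableEq A] : MatC (A × A) :=
  Matrix.of fun p q => (if p.1 = p.2 then (1 : ℂ) else 0) * (if q.1 = q.2 then 1 else 0)

/-- The Choi matrix `J_N = (id_A ⊗ N)(|Φ⟩⟨Φ|)`. -/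
def choiMat {A B : Type*} [DecidableEq A] (N : MatC A →ₗ[ℂ] MatC B) : MatC (A × B) :=
  idTensor A N (maxEnt A)

/-! ### State divergences -/

/-- The set of achievable Type II error values for tests with Type I error at most `ε`. -/
def betaSet {ι : Type*} [Fintype ι] [DecidableEq ι] (ε : ℝ) (ρ σ : MatC ι) : Set ℝ :=
  {x | ∃ T : MatC ι, T.PosSemidef ∧ (1 - T).PosSemidef ∧
    1 - ε ≤ ((T * ρ).trace).re ∧ x = ((T * σ).trace).re}

/-- The hypothesis testing relative entropy `D_H^ε(ρ‖σ)`, valued in extended reals. -/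
def DHe {ι : Type*} [Fintype ι] [DecidableEq ι] (ε : ℝ) (ρ σ : MatC ι) : EReal :=
  negLog2 (sInf (betaSet ε ρ σ))

/-- The Umegaki relative entropy `D(ρ‖σ)` (base 2), `+∞` if the support condition fails. -/
def relEnt {ι : Type*} [Fintype ι] [DecidableEq ι] (ρ σ : MatC ι) : EReal :=
  if SuppLe ρ σ then (((ρ * (matLog2 ρ - matLog2 σ)).trace).re : EReal) else ⊤

/-- The Petz Rényi divergence `D̄_α(ρ‖σ)` for `α ∈ (0,1)`, `+∞` when
`tr[ρ^α σ^{1−α}] = 0`. -/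
def petzD (α : ℝ) {ι : Type*} [Fintype ι] [DecidableEq ι] (ρ σ : MatC ι) : EReal :=
  if 0 < (((matPow ρ α * matPow σ (1 - α)).trace).re) then
    (((α - 1)⁻¹ * Real.logb 2 (((matPow ρ α * matPow σ (1 - α)).trace).re) : ℝ) : EReal)
  else ⊤

/-- The sandwiched Rényi divergence `D̃_α(ρ‖σ)` for `α > 1`. -/
def sandD (α : ℝ) {ι : Type*} [Fintype ι] [DecidableEq ι] (ρ σ : MatC ι) : EReal :=
  if SuppLe ρ σ then
    ((((α - 1)⁻¹ *
        Real.logb 2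
          (((matPow (matPow σ ((1 - α) / (2 * α)) * ρ * matPow σ ((1 - α) / (2 * α))) α).trace).re)) : ℝ) : EReal)
  else ⊤

/-- The max-relative entropy `D_max(ρ‖σ)`. -/
def Dmax {ι : Type*} [Fintype ι] (ρ σ : MatC ι) : EReal :=
  sInf {y : EReal | ∃ t : ℝ, ((t : ℂ) • σ - ρ).PosSemidef ∧ y = ((Real.logb 2 t : ℝ) : EReal)}

/-- Trace norm `‖X‖₁ = tr √(X†X)`. -/
def traceNorm {ι : Type*} [Fintype ι] [DecidableEq ι] (X : MatC ι) : ℝ :=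
  ((matPow (X.conjTranspose * X) 2⁻¹).trace).re

/-- Generalized fidelity of subnormalized states. -/
def genFid {ι : Type*} [Fintype ι] [DecidableEq ι] (ρ σ : MatC ι) : ℝ :=
  traceNorm (matPow ρ 2⁻¹ * matPow σ 2⁻¹) +
    Real.sqrt ((1 - (ρ.trace).re) * (1 - (σ.trace).re))

/-- Purified distance. -/
def purDist {ι : Type*} [Fintype ι] [DecidableEq ι] (ρ σ : MatC ι) : ℝ :=
  Real.sqrt (1 - (genFid ρ σ) ^ 2)

/-- The smooth max-relative entropy `D_max^ε(ρ‖σ)`. -/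
def DmaxSmooth (ε : ℝ) {ι : Type*} [Fintype ι] [DecidableEq ι] (ρ σ : MatC ι) : EReal :=
  sInf {y : EReal | ∃ ρ' : MatC ι, ρ'.PosSemidef ∧ ((ρ'.trace).re ≤ 1) ∧
    purDist ρ' ρ ≤ ε ∧ y = Dmax ρ' σ}

/-! ### Channel divergences -/

/-- A generalized state divergence: a function on pairs of matrices over every
finite system. -/
abbrev StateDiv :=
  ∀ (ι : Type) (_ : Fintype ι) (_ : DecidableEq ι), MatC ι → MatC ι → EReal

/-- The Umegaki relative entropy as a `StateDiv`. -/
def UmegakiD : StateDiv := fun ι fι dι ρ σ => @relEnt ι fι dι ρ σ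

/-- The sandwiched Rényi divergence as a `StateDiv`. -/
def SandD (α : ℝ) : StateDiv := fun ι fι dι ρ σ => @sandD α ι fι dι ρ σ

/-- The Petz Rényi divergence as a `StateDiv`. -/
def PetzD (α : ℝ) : StateDiv := fun ι fι dι ρ σ => @petzD α ι fι dι ρ σ

/-- The smooth max-relative entropy as a `StateDiv`. -/
def DmaxD (ε : ℝ) : StateDiv := fun ι fι dι ρ σ => @DmaxSmooth ε ι fι dι ρ σ

/-- The hypothesis-testing relative entropy as a `StateDiv`. -/
def DHD (ε : ℝ) : StateDiv := fun ι fι dι ρ σ => @DHe ι fι dι ε ρ σ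

/-- The channel divergence induced by a state divergence: supremum over all
finite reference systems `R` and input states `ψ` on `R × A`. -/
def chanDiv (D : StateDiv) {A B : Type} [Fintype A] [Fintype B] [DecidableEq B]
    (N M : MatC A →ₗ[ℂ] MatC B) : EReal :=
  sSup {x : EReal | ∃ (R : Type) (fR : Fintype R) (dR : DecidableEq R)
    (ψ : MatC (R × A)),
      letI := fR; letI := dR;
      IsDensity ψ ∧
        x = D (R × B) inferInstance inferInstance (idTensor R N ψ) (idTensor R M ψ)}

/-- The regularized channel divergence `sup_{n ≥ 1} (1/n) D(N^{⊗n}‖M^{⊗n})`. -/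
def regChanDiv (D : StateDiv) {A B : Type} [Fintype A] [Fintype B] [DecidableEq B]
    (N M : MatC A →ₗ[ℂ] MatC B) : EReal :=
  sSup {x : EReal | ∃ n : ℕ, 1 ≤ n ∧
    x = (((n : ℝ)⁻¹ : ℝ) : EReal) * chanDiv D (powChan N n) (powChan M n)}

/-- The amortized channel divergence. -/
def amortChanDiv (D : StateDiv) {A B : Type} [Fintype A] [Fintype B] [DecidableEq A]
    [DecidableEq B] (N M : MatC A →ₗ[ℂ] MatC B) : EReal :=
  sSup {x : EReal | ∃ (R : Type) (fR : Fintype R) (dR : DecidableEq R)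
    (ψ φ : MatC (R × A)),
      letI := fR; letI := dR;
      IsDensity ψ ∧ IsDensity φ ∧
        x = D (R × B) inferInstance inferInstance (idTensor R N ψ) (idTensor R M φ)
            - D (R × A) inferInstance inferInstance ψ φ}


/-! ### Discrimination strategies -/

/-- Tensor product of matrices over a (dependent) family of systems. -/
def piKron {n : ℕ} {κ : Fin n → Type} (X : ∀ i, MatC (κ i)) : MatC (∀ i, κ i) :=
  Matrix.of fun f g => ∏ i, X i (f i) (g i)

/-- A coherent (parallel) strategy for discriminating `n` uses of channels
`A → B`: a reference system `R`, an input state on `R × A^n` and a binary test. -/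
structure CohStrategy (A B : Type) [Fintype A] [DecidableEq A] [Fintype B] [DecidableEq B]
    (n : ℕ) where
  R : Type
  [fR : Fintype R]
  [dR : DecidableEq R]
  ψ : MatC (R × (Fin n → A))
  hψ : IsDensity ψ
  T : MatC (R × (Fin n → B))
  hT₁ : T.PosSemidef
  hT₂ : (1 - T).PosSemidef

attribute [instance] CohStrategy.fR CohStrategy.dR

/-- Type I error of a coherent strategy against the null hypothesis channel `N`. -/
def CohStrategy.typeI {A B : Type} [Fintype A] [DecidableEq A] [Fintype B] [DecidableEq B]
    {n : ℕ} (N : MatC A →ₗ[ℂ] MatC B) (S : CohStrategy A B n) : ℝ :=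
  (((1 - S.T) * idTensor S.R (powChan N n) S.ψ).trace).re

/-- Type II error of a coherent strategy against the alternative channel `M`. -/
def CohStrategy.typeII {A B : Type} [Fintype A] [DecidableEq A] [Fintype B] [DecidableEq B]
    {n : ℕ} (M : MatC A →ₗ[ℂ] MatC B) (S : CohStrategy A B n) : ℝ :=
  ((S.T * idTensor S.R (powChan M n) S.ψ).trace).re

/-- **Conjecture 1** (exponentially strong converse of channel hypothesis testing
under coherent strategies). -/
def Conjecture1 : Prop :=
  ∀ (A B : Type) (fA : Fintype A) (dA : DecidableEq A) (fB : Fintype B) (dB : DecidableEq B),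
    letI := fA; letI := dA; letI := fB; letI := dB;
    ∀ (N M : MatC A →ₗ[ℂ] MatC B), IsCPTP N → IsCPTP M → (choiMat N).PosDef →
      ∀ S : (n : ℕ) → CohStrategy A B n,
        regChanDiv UmegakiD N M <
          Filter.liminf
            (fun n : ℕ => -((((n : ℝ)⁻¹ : ℝ) : EReal) * elog2 ((S n).typeII M)))
            Filter.atTop →
        ∃ c : ℝ, 0 < c ∧ ∀ᶠ n : ℕ in Filter.atTop,
          1 - (S n).typeI N ≤ (2 : ℝ) ^ (-(c * n))


/-- A sequential (adaptive) strategy for discriminating `m + 1` uses of channels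
`A → B`: reference systems `R 0, …, R m`, an initial state on `R 0 × A`, adaptive
update channels `P i : R i × B → R (i+1) × A`, and a final binary test. -/
structure SeqStrategy (A B : Type) [Fintype A] [DecidableEq A] [Fintype B] [DecidableEq B]
    (m : ℕ) where
  R : Fin (m + 1) → Type
  [fR : ∀ i, Fintype (R i)]
  [dR : ∀ i, DecidableEq (R i)]
  ψ : MatC (R 0 × A)
  hψ : IsDensity ψ
  P : ∀ i : Fin m, MatC (R i.castSucc × B) →ₗ[ℂ] MatC (R i.succ × A)
  hP : ∀ i, IsCPTP (P i)
  T : MatC (R (Fin.last m) × B)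
  hT₁ : T.PosSemidef
  hT₂ : (1 - T).PosSemidef

attribute [instance] SeqStrategy.fR SeqStrategy.dR

/-- The intermediate testing states of a sequential strategy when the unknown
channel is `N`: after `i + 1` uses of the channel, on system `R i × B`. -/
def SeqStrategy.states {A B : Type} [Fintype A] [DecidableEq A] [Fintype B] [DecidableEq B]
    {m : ℕ} (S : SeqStrategy A B m) (N : MatC A →ₗ[ℂ] MatC B) :
    ∀ i : Fin (m + 1), MatC (S.R i × B) :=
  Fin.induction (idTensor (S.R 0) N S.ψ)
    (fun i prev => idTensor (S.R i.succ) N (S.P i prev))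

/-- The final testing state of a sequential strategy for channel `N`. -/
def SeqStrategy.finalState {A B : Type} [Fintype A] [DecidableEq A] [Fintype B]
    [DecidableEq B] {m : ℕ} (S : SeqStrategy A B m) (N : MatC A →ₗ[ℂ] MatC B) :
    MatC (S.R (Fin.last m) × B) :=
  S.states N (Fin.last m)

/-- Type I error of a sequential strategy against the null hypothesis channel `N`. -/
def SeqStrategy.typeI {A B : Type} [Fintype A] [DecidableEq A] [Fintype B] [DecidableEq B]
    {m : ℕ} (N : MatC A →ₗ[ℂ] MatC B) (S : SeqStrategy A B m) : ℝ :=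
  (((1 - S.T) * S.finalState N).trace).re

/-- Type II error of a sequential strategy against the alternative channel `M`. -/
def SeqStrategy.typeII {A B : Type} [Fintype A] [DecidableEq A] [Fintype B] [DecidableEq B]
    {m : ℕ} (M : MatC A →ₗ[ℂ] MatC B) (S : SeqStrategy A B m) : ℝ :=
  ((S.T * S.finalState M).trace).re

/-- A product strategy for discriminating `n` uses of channels `A → B`:
reference systems `R i`, product input states `φ i` on `R i × A`, and a binary
test on the joint output. -/
structure ProdStrategy (A B : Type) [Fintype A] [DecidableEq A] [Fintype B] [DecidableEq B]
    (n : ℕ) where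
  R : Fin n → Type
  [fR : ∀ i, Fintype (R i)]
  [dR : ∀ i, DecidableEq (R i)]
  φ : ∀ i, MatC (R i × A)
  hφ : ∀ i, IsDensity (φ i)
  T : MatC (∀ i, R i × B)
  hT₁ : T.PosSemidef
  hT₂ : (1 - T).PosSemidef

attribute [instance] ProdStrategy.fR ProdStrategy.dR

/-- The testing state of a product strategy for channel `N`. -/
def ProdStrategy.state {A B : Type} [Fintype A] [DecidableEq A] [Fintype B] [DecidableEq B]
    {n : ℕ} (S : ProdStrategy A B n) (N : MatC A →ₗ[ℂ] MatC B) : MatC (∀ i, S.R i × B) :=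
  piKron fun i => idTensor (S.R i) N (S.φ i)

/-- Type I error of a product strategy against the null hypothesis channel `N`. -/
def ProdStrategy.typeI {A B : Type} [Fintype A] [DecidableEq A] [Fintype B] [DecidableEq B]
    {n : ℕ} (N : MatC A →ₗ[ℂ] MatC B) (S : ProdStrategy A B n) : ℝ :=
  (((1 - S.T) * S.state N).trace).re

/-- Type II error of a product strategy against the alternative channel `M`. -/
def ProdStrategy.typeII {A B : Type} [Fintype A] [DecidableEq A] [Fintype B] [DecidableEq B]
    {n : ℕ} (M : MatC A →ₗ[ℂ] MatC B) (S : ProdStrategy A B n) : ℝ :=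
  ((S.T * S.state M).trace).re

/-- Extra: the `n`-fold power of a channel acting on matrices indexed by
`Fin n → R × A` (reference `R` paired with each channel input). -/
noncomputable def pairPow (R : Type) {A B : Type} (N : MatC A →ₗ[ℂ] MatC B) (n : ℕ) :
    MatC (Fin n → R × A) →ₗ[ℂ] MatC (Fin n → R × B) :=
  reindexChan (Equiv.arrowProdEquivProdArrow (Fin n) (fun _ => R) (fun _ => A)).symm
    (Equiv.arrowProdEquivProdArrow (Fin n) (fun _ => R) (fun _ => B)).symm
    (idTensor (Fin n → R) (powChan N n))

/-- The optimal hypothesis-testing relative entropy over product strategies. -/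
noncomputable def DHpro (ε : ℝ) {A B : Type} [Fintype A] [DecidableEq A] [Fintype B]
    [DecidableEq B] (N M : MatC A →ₗ[ℂ] MatC B) (n : ℕ) : EReal :=
  sSup {x : EReal | ∃ (R : Fin n → Type) (fR : ∀ i, Fintype (R i))
    (dR : ∀ i, DecidableEq (R i)) (φ : ∀ i, MatC (R i × A)),
      letI := fR; letI := dR;
      (∀ i, IsDensity (φ i)) ∧
        x = DHe ε (piKron fun i => idTensor (R i) N (φ i))
              (piKron fun i => idTensor (R i) M (φ i))}

/-- The optimal hypothesis-testing relative entropy over sequential strategies for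
`m + 1` channel uses. -/
noncomputable def DHseq (ε : ℝ) {A B : Type} [Fintype A] [DecidableEq A] [Fintype B]
    [DecidableEq B] (N M : MatC A →ₗ[ℂ] MatC B) (m : ℕ) : EReal :=
  sSup {x : EReal | ∃ S : SeqStrategy A B m,
    x = DHe ε (S.finalState N) (S.finalState M)}

/-- The strong converse exponent of channel discrimination under product strategies. -/
noncomputable def scExpPRO (r : ℝ) {A B : Type} [Fintype A] [DecidableEq A] [Fintype B]
    [DecidableEq B] (N M : MatC A →ₗ[ℂ] MatC B) : EReal :=
  sInf {e : EReal | ∃ S : (n : ℕ) → ProdStrategy A B n,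
    (Filter.limsup (fun n : ℕ => (((n : ℝ)⁻¹ : ℝ) : EReal) * elog2 ((S n).typeII M))
        Filter.atTop ≤ ((-r : ℝ) : EReal)) ∧
    e = -Filter.liminf (fun n : ℕ => (((n : ℝ)⁻¹ : ℝ) : EReal) * elog2 (1 - (S n).typeI N))
        Filter.atTop}

/-- The error exponent of channel discrimination under product strategies. -/
noncomputable def erExpPRO (r : ℝ) {A B : Type} [Fintype A] [DecidableEq A] [Fintype B]
    [DecidableEq B] (N M : MatC A →ₗ[ℂ] MatC B) : EReal :=
  sSup {e : EReal | ∃ S : (n : ℕ) → ProdStrategy A B n,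
    (Filter.limsup (fun n : ℕ => (((n : ℝ)⁻¹ : ℝ) : EReal) * elog2 ((S n).typeII M))
        Filter.atTop ≤ ((-r : ℝ) : EReal)) ∧
    e = -Filter.limsup (fun n : ℕ => (((n : ℝ)⁻¹ : ℝ) : EReal) * elog2 ((S n).typeI N))
        Filter.atTop}

/-- The error exponent of channel discrimination under coherent strategies. -/
noncomputable def erExpCOH (r : ℝ) {A B : Type} [Fintype A] [DecidableEq A] [Fintype B]
    [DecidableEq B] (N M : MatC A →ₗ[ℂ] MatC B) : EReal :=
  sSup {e : EReal | ∃ S : (n : ℕ) → CohStrategy A B n,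
    (Filter.limsup (fun n : ℕ => (((n : ℝ)⁻¹ : ℝ) : EReal) * elog2 ((S n).typeII M))
        Filter.atTop ≤ ((-r : ℝ) : EReal)) ∧
    e = -Filter.limsup (fun n : ℕ => (((n : ℝ)⁻¹ : ℝ) : EReal) * elog2 ((S n).typeI N))
        Filter.atTop}

/-!
Write `κ := D(1‖1)` for the one-dimensional system. Data processing through replacement channels
gives `κ ≤ D(ρ‖σ)` and `D(ρ‖ρ) = κ`, and additivity against the trivial system gives
`D(ρ‖σ) + κ = D(ρ‖σ)`, so `κ ∈ {⊥, 0, ⊤}`. If `κ = ⊥` or `κ = ⊤`, every difference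
`D(Nψ‖Mφ) - D(ψ‖φ)` is `⊥` (in `EReal`, `⊥ - x = x - ⊤ = ⊥`), so all amortized divergences are `⊥`.
If `κ = 0`, `D` is nonnegative on states. Running `N₁ ⊗ N₂` as `N₂` followed by `N₁`, each with
the other system absorbed into the reference, telescopes into subadditivity; feeding product
inputs `ψ₁ ⊗ ψ₂` and using additivity of `D` gives superadditivity.
-/

lemma Matrix.PosSemidef.sum_diagBlocks {ι τ : Type} [Fintype ι] [Fintype τ] {X : MatC (ι × τ)}
    (hX : X.PosSemidef) : (Matrix.of fun i i' => ∑ t, X (i, t) (i', t) : MatC ι).PosSemidef := by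
  have h : (Matrix.of fun i i' => ∑ t, X (i, t) (i', t) : MatC ι)
      = ∑ t, X.submatrix (fun i => (i, t)) (fun i => (i, t)) := by
    ext i i'
    simp [Matrix.sum_apply]
  rw [h]
  exact Matrix.posSemidef_sum _ fun t _ => hX.submatrix _

lemma IsDensity.kronecker {ι τ : Type} [Fintype ι] [Fintype τ] {X : MatC ι} {Y : MatC τ}
    (hX : IsDensity X) (hY : IsDensity Y) : IsDensity (X ⊗ₖ Y) :=
  ⟨hX.1.kronecker hY.1, by rw [Matrix.trace_kronecker, hX.2, hY.2, one_mul]⟩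

lemma isDensity_one_unit : IsDensity (1 : MatC Unit) :=
  ⟨Matrix.PosSemidef.one, by simp⟩

section Maps

variable {ι τ R S A B C : Type}

def reindexMap (e : ι ≃ τ) : MatC ι →ₗ[ℂ] MatC τ :=
  (Matrix.reindexLinearEquiv ℂ ℂ e e).toLinearMap

lemma reindexMap_apply (e : ι ≃ τ) (X : MatC ι) : reindexMap e X = X.submatrix e.symm e.symm :=
  rfl

lemma reindexMap_symm_reindexMap (e : ι ≃ τ) (X : MatC ι) :
    reindexMap e.symm (reindexMap e X) = X := by
  ext
  simp [reindexMap_apply]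

lemma reindexMap_prodPUnit_symm (X : MatC ι) :
    reindexMap (Equiv.prodPUnit ι).symm X = X ⊗ₖ (1 : MatC Unit) := by
  ext
  simp [reindexMap_apply]

def replaceMap (ι : Type) {τ : Type} [Fintype ι] (ω : MatC τ) : MatC ι →ₗ[ℂ] MatC τ :=
  (Matrix.traceLinearMap ι ℂ ℂ).smulRight ω

lemma replaceMap_apply [Fintype ι] (ω : MatC τ) (X : MatC ι) : replaceMap ι ω X = X.trace • ω :=
  rfl

lemma idTensor_apply (N : MatC A →ₗ[ℂ] MatC B) (X : MatC (R × A)) (p q : R × B) :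
    idTensor R N X p q = N (Matrix.of fun a a' => X (p.1, a) (q.1, a')) p.2 q.2 := rfl

lemma idTensor_idTensor (N : MatC A →ₗ[ℂ] MatC B) (X : MatC (S × (R × A))) :
    idTensor S (idTensor R N) X
      = reindexMap (Equiv.prodAssoc S R B)
          (idTensor (S × R) N (reindexMap (Equiv.prodAssoc S R A).symm X)) :=
  rfl

lemma idTensor_reindexMap (e : ι ≃ τ) (X : MatC (R × ι)) :
    idTensor R (reindexMap e) X = reindexMap ((Equiv.refl R).prodCongr e) X :=
  rfl

lemma idTensor_comp (f : MatC B →ₗ[ℂ] MatC C) (g : MatC A →ₗ[ℂ] MatC B) (X : MatC (R × A)) :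
    idTensor R (f ∘ₗ g) X = idTensor R f (idTensor R g X) :=
  rfl

lemma tensorId_eq (N : MatC A →ₗ[ℂ] MatC B) :
    tensorId R N
      = reindexMap (Equiv.prodComm R B) ∘ₗ idTensor R N ∘ₗ reindexMap (Equiv.prodComm A R) :=
  rfl

lemma idTensor_replaceMap [Fintype ι] (ω : MatC τ) (X : MatC (R × ι)) :
    idTensor R (replaceMap ι ω) X = (Matrix.of fun r r' => ∑ i, X (r, i) (r', i)) ⊗ₖ ω := by
  ext p q
  simp [idTensor_apply, replaceMap_apply, Matrix.trace]

end Maps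

section CPTP

variable {ι τ R A B C A' B' : Type} [Fintype ι] [Fintype τ] [Fintype R]
  [Fintype A] [Fintype B] [Fintype C] [Fintype A'] [Fintype B']

lemma trace_idTensor {N : MatC A →ₗ[ℂ] MatC B} (hN : ∀ X : MatC A, (N X).trace = X.trace)
    (X : MatC (R × A)) : (idTensor R N X).trace = X.trace := by
  simp only [Matrix.trace, Matrix.diag, Fintype.sum_prod_type]
  refine Finset.sum_congr rfl fun r _ => ?_
  simpa [Matrix.trace, idTensor_apply] using hN (Matrix.of fun a a' => X (r, a) (r, a'))

lemma IsCPTP.idTensor {N : MatC A →ₗ[ℂ] MatC B} (hN : IsCPTP N) :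
    IsCPTP (idTensor R N) := by
  refine ⟨fun S _ X hX => ?_, trace_idTensor hN.2⟩
  rw [idTensor_idTensor]
  exact (hN.1 (S × R) inferInstance _ (hX.submatrix _)).submatrix _

lemma IsCPTP.reindexMap (e : ι ≃ τ) : IsCPTP (reindexMap e) := by
  refine ⟨fun S _ X hX => ?_, fun X => ?_⟩
  · rw [idTensor_reindexMap]
    exact hX.submatrix _
  · simp only [reindexMap_apply, Matrix.trace, Matrix.diag, Matrix.submatrix_apply]
    exact e.symm.sum_comp fun i => X i i

lemma IsCPTP.comp {f : MatC B →ₗ[ℂ] MatC C} {g : MatC A →ₗ[ℂ] MatC B}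
    (hf : IsCPTP f) (hg : IsCPTP g) : IsCPTP (f ∘ₗ g) :=
  ⟨fun S fS X hX => idTensor_comp f g X ▸ hf.1 S fS _ (hg.1 S fS X hX),
    fun X => (hf.2 _).trans (hg.2 X)⟩

lemma IsCPTP.tensorChan {N : MatC A →ₗ[ℂ] MatC B} {M : MatC A' →ₗ[ℂ] MatC B'}
    (hN : IsCPTP N) (hM : IsCPTP M) : IsCPTP (tensorChan N M) := by
  refine IsCPTP.comp ?_ hM.idTensor
  rw [tensorId_eq]
  exact (IsCPTP.reindexMap _).comp (hN.idTensor.comp (IsCPTP.reindexMap _))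

lemma IsCPTP.replaceMap {ω : MatC τ} (hω : IsDensity ω) : IsCPTP (replaceMap ι ω) := by
  refine ⟨fun S _ X hX => ?_, fun X => by simp [replaceMap_apply, hω.2]⟩
  rw [idTensor_replaceMap]
  exact hX.sum_diagBlocks.kronecker hω.1

lemma IsCPTP.isDensity {N : MatC A →ₗ[ℂ] MatC B} (hN : IsCPTP N) {ρ : MatC A}
    (hρ : IsDensity ρ) : IsDensity (N ρ) := by
  refine ⟨?_, by rw [hN.2, hρ.2]⟩
  have h := hN.1 Unit inferInstance (_root_.reindexMap (Equiv.punitProd A).symm ρ)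
    (hρ.1.submatrix _)
  exact h.submatrix fun b => ((), b)

end CPTP

lemma EReal.sub_le_add_of_sub_le_of_sub_le {a b c d₁ d₂ : EReal} (hb : b ≠ ⊥) (hd₁ : d₁ ≠ ⊥)
    (h₁ : a - b ≤ d₁) (h₂ : b - c ≤ d₂) : a - c ≤ d₁ + d₂ := by
  rcases eq_or_ne c ⊤ with rfl | hc
  · simp
  rcases eq_or_ne b ⊤ with rfl | hb'
  · rw [EReal.top_sub hc, top_le_iff] at h₂
    rw [h₂, EReal.add_top_of_ne_bot hd₁]
    exact le_top
  lift b to ℝ using ⟨hb', hb⟩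
  calc a - c = (a - b) + (b - c) := by
        rw [sub_eq_add_neg, sub_eq_add_neg, sub_eq_add_neg, add_assoc, ← add_assoc (-(b : EReal)),
          ← EReal.coe_neg, ← EReal.coe_add, neg_add_cancel, EReal.coe_zero, zero_add]
    _ ≤ d₁ + d₂ := add_le_add h₁ h₂

lemma EReal.sSup_add_sSup_le {s t : Set EReal} {c : EReal}
    (h : ∀ a ∈ s, ∀ b ∈ t, a + b ≤ c) : sSup s + sSup t ≤ c := by
  refine EReal.add_le_of_forall_lt fun a' ha' b' hb' => ?_
  obtain ⟨a, ha, ha'a⟩ := lt_sSup_iff.mp ha'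
  obtain ⟨b, hb, hb'b⟩ := lt_sSup_iff.mp hb'
  exact (add_le_add ha'a.le hb'b.le).trans (h a ha b hb)

namespace StateDiv

def SatisfiesDPI (D : StateDiv) : Prop :=
  ∀ (ι₁ ι₂ : Type) (f₁ : Fintype ι₁) (d₁ : DecidableEq ι₁)
      (f₂ : Fintype ι₂) (d₂ : DecidableEq ι₂) (E : MatC ι₁ →ₗ[ℂ] MatC ι₂),
    letI := f₁; letI := d₁; letI := f₂; letI := d₂;
    IsCPTP E → ∀ ρ σ : MatC ι₁, IsDensity ρ → IsDensity σ →
      D ι₂ f₂ d₂ (E ρ) (E σ) ≤ D ι₁ f₁ d₁ ρ σ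

def IsTensorAdditive (D : StateDiv) : Prop :=
  ∀ (ι₁ ι₂ : Type) (f₁ : Fintype ι₁) (d₁ : DecidableEq ι₁)
      (f₂ : Fintype ι₂) (d₂ : DecidableEq ι₂) (ρ₁ σ₁ : MatC ι₁) (ρ₂ σ₂ : MatC ι₂),
    letI := f₁; letI := d₁; letI := f₂; letI := d₂;
    IsDensity ρ₁ → IsDensity σ₁ → IsDensity ρ₂ → IsDensity σ₂ →
      D (ι₁ × ι₂) inferInstance inferInstance (ρ₁ ⊗ₖ ρ₂) (σ₁ ⊗ₖ σ₂) =
        D ι₁ f₁ d₁ ρ₁ σ₁ + D ι₂ f₂ d₂ ρ₂ σ₂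

def unitValue (D : StateDiv) : EReal :=
  D Unit inferInstance inferInstance 1 1

variable {D : StateDiv} {ι τ : Type} [Fintype ι] [DecidableEq ι] [Fintype τ] [DecidableEq τ]
  {ρ σ : MatC ι}

lemma SatisfiesDPI.le (hD : D.SatisfiesDPI) {E : MatC ι →ₗ[ℂ] MatC τ} (hE : IsCPTP E)
    (hρ : IsDensity ρ) (hσ : IsDensity σ) :
    D τ inferInstance inferInstance (E ρ) (E σ) ≤ D ι inferInstance inferInstance ρ σ :=
  hD _ _ _ _ _ _ E hE ρ σ hρ hσ

lemma SatisfiesDPI.apply_reindexMap (hD : D.SatisfiesDPI) (e : ι ≃ τ)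
    (hρ : IsDensity ρ) (hσ : IsDensity σ) :
    D τ inferInstance inferInstance (reindexMap e ρ) (reindexMap e σ)
      = D ι inferInstance inferInstance ρ σ := by
  refine le_antisymm (hD.le (IsCPTP.reindexMap e) hρ hσ) ?_
  have h := hD.le (IsCPTP.reindexMap e.symm) ((IsCPTP.reindexMap e).isDensity hρ)
    ((IsCPTP.reindexMap e).isDensity hσ)
  rwa [reindexMap_symm_reindexMap, reindexMap_symm_reindexMap] at h

lemma SatisfiesDPI.unitValue_le (hD : D.SatisfiesDPI) (hρ : IsDensity ρ) (hσ : IsDensity σ) :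
    D.unitValue ≤ D ι inferInstance inferInstance ρ σ := by
  have h := hD.le (IsCPTP.replaceMap (ι := ι) isDensity_one_unit) hρ hσ
  rwa [replaceMap_apply, replaceMap_apply, hρ.2, hσ.2, one_smul] at h

lemma SatisfiesDPI.apply_ne_bot (hD : D.SatisfiesDPI) (hbot : D.unitValue ≠ ⊥)
    (hρ : IsDensity ρ) (hσ : IsDensity σ) : D ι inferInstance inferInstance ρ σ ≠ ⊥ :=
  ne_bot_of_le_ne_bot hbot (hD.unitValue_le hρ hσ)

lemma SatisfiesDPI.apply_self (hD : D.SatisfiesDPI) (hρ : IsDensity ρ) :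
    D ι inferInstance inferInstance ρ ρ = D.unitValue := by
  refine le_antisymm ?_ (hD.unitValue_le hρ hρ)
  have h := hD.le (IsCPTP.replaceMap (ι := Unit) hρ) isDensity_one_unit isDensity_one_unit
  rwa [replaceMap_apply, Matrix.trace_one, Fintype.card_unit, Nat.cast_one, one_smul] at h

lemma IsTensorAdditive.apply_kronecker (hD : D.IsTensorAdditive) {ρ' σ' : MatC τ}
    (hρ : IsDensity ρ) (hσ : IsDensity σ) (hρ' : IsDensity ρ') (hσ' : IsDensity σ') :
    D (ι × τ) inferInstance inferInstance (ρ ⊗ₖ ρ') (σ ⊗ₖ σ')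
      = D ι inferInstance inferInstance ρ σ + D τ inferInstance inferInstance ρ' σ' :=
  hD _ _ _ _ _ _ ρ σ ρ' σ' hρ hσ hρ' hσ'

lemma apply_add_unitValue (hD : D.SatisfiesDPI) (hadd : D.IsTensorAdditive)
    (hρ : IsDensity ρ) (hσ : IsDensity σ) :
    D ι inferInstance inferInstance ρ σ + D.unitValue = D ι inferInstance inferInstance ρ σ := by
  rw [unitValue, ← hadd.apply_kronecker hρ hσ isDensity_one_unit isDensity_one_unit,
    ← reindexMap_prodPUnit_symm, ← reindexMap_prodPUnit_symm, hD.apply_reindexMap _ hρ hσ]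

lemma unitValue_eq_zero_or_bot_or_top (hD : D.SatisfiesDPI) (hadd : D.IsTensorAdditive) :
    D.unitValue = 0 ∨ D.unitValue = ⊥ ∨ D.unitValue = ⊤ := by
  have h : D.unitValue + D.unitValue = D.unitValue :=
    apply_add_unitValue hD hadd isDensity_one_unit isDensity_one_unit
  generalize D.unitValue = κ at h ⊢
  induction κ using EReal.rec with
  | bot => simp
  | top => simp
  | coe r =>
    left
    norm_cast at h ⊢
    linarith

lemma apply_sub_apply_eq_bot_of_unitValue_ne_zero (hD : D.SatisfiesDPI)
    (hadd : D.IsTensorAdditive) (h0 : D.unitValue ≠ 0) {ρ' σ' : MatC τ}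
    (hρ : IsDensity ρ) (hσ : IsDensity σ) (hρ' : IsDensity ρ') (hσ' : IsDensity σ') :
    D ι inferInstance inferInstance ρ σ - D τ inferInstance inferInstance ρ' σ' = ⊥ := by
  rcases (unitValue_eq_zero_or_bot_or_top hD hadd).resolve_left h0 with hbot | htop
  · rw [← apply_add_unitValue hD hadd hρ hσ, hbot, EReal.add_bot, EReal.bot_sub]
  · have h := hD.unitValue_le hρ' hσ'
    rw [htop, top_le_iff] at h
    rw [h, EReal.sub_top]

end StateDiv

section Amortized

open StateDiv

variable {D : StateDiv} {R R₁ R₂ A B A₁ B₁ A₂ B₂ : Type}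

def Equiv.prodRightComm (R X Y : Type) : (R × X) × Y ≃ (R × Y) × X where
  toFun p := ((p.1.1, p.2), p.1.2)
  invFun p := ((p.1.1, p.2), p.1.2)
  left_inv _ := rfl
  right_inv _ := rfl

lemma idTensor_tensorChan (N₁ : MatC A₁ →ₗ[ℂ] MatC B₁) (N₂ : MatC A₂ →ₗ[ℂ] MatC B₂)
    (ψ : MatC (R × (A₁ × A₂))) :
    idTensor R (tensorChan N₁ N₂) ψ
      = reindexMap
          ((Equiv.prodAssoc R B₂ B₁).trans ((Equiv.refl R).prodCongr (Equiv.prodComm B₂ B₁)))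
          (idTensor (R × B₂) N₁ (reindexMap (Equiv.prodRightComm R A₁ B₂)
            (idTensor (R × A₁) N₂ (reindexMap (Equiv.prodAssoc R A₁ A₂).symm ψ)))) :=
  rfl

lemma idTensor_tensorChan_kronecker (N₁ : MatC A₁ →ₗ[ℂ] MatC B₁) (N₂ : MatC A₂ →ₗ[ℂ] MatC B₂)
    (ψ₁ : MatC (R₁ × A₁)) (ψ₂ : MatC (R₂ × A₂)) :
    idTensor (R₁ × R₂) (tensorChan N₁ N₂)
        (reindexMap (Equiv.prodProdProdComm R₁ A₁ R₂ A₂) (ψ₁ ⊗ₖ ψ₂))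
      = reindexMap (Equiv.prodProdProdComm R₁ B₁ R₂ B₂)
          (idTensor R₁ N₁ ψ₁ ⊗ₖ idTensor R₂ N₂ ψ₂) := by
  ext ⟨⟨r₁, r₂⟩, b₁, b₂⟩ ⟨⟨r₁', r₂'⟩, b₁', b₂'⟩
  show N₁ (Matrix.of fun a a' => N₂ (Matrix.of fun c c' =>
      ψ₁ (r₁, a) (r₁', a') * ψ₂ (r₂, c) (r₂', c')) b₂ b₂') b₁ b₁'
    = N₁ (Matrix.of fun a a' => ψ₁ (r₁, a) (r₁', a')) b₁ b₁'
      * N₂ (Matrix.of fun c c' => ψ₂ (r₂, c) (r₂', c')) b₂ b₂'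
  have hinner : (Matrix.of fun a a' => N₂ (Matrix.of fun c c' =>
        ψ₁ (r₁, a) (r₁', a') * ψ₂ (r₂, c) (r₂', c')) b₂ b₂')
      = N₂ (Matrix.of fun c c' => ψ₂ (r₂, c) (r₂', c')) b₂ b₂'
        • Matrix.of fun a a' => ψ₁ (r₁, a) (r₁', a') := by
    ext a a'
    have h : (Matrix.of fun c c' => ψ₁ (r₁, a) (r₁', a') * ψ₂ (r₂, c) (r₂', c'))
        = ψ₁ (r₁, a) (r₁', a') • Matrix.of fun c c' => ψ₂ (r₂, c) (r₂', c') := by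
      ext
      simp
    rw [Matrix.of_apply, h, map_smul]
    simp [mul_comm]
  rw [hinner, map_smul]
  simp [mul_comm]

variable [Fintype R] [DecidableEq R] [Fintype A] [DecidableEq A] [Fintype B] [DecidableEq B]

lemma le_amortChanDiv (N M : MatC A →ₗ[ℂ] MatC B) {ψ φ : MatC (R × A)}
    (hψ : IsDensity ψ) (hφ : IsDensity φ) :
    D (R × B) inferInstance inferInstance (idTensor R N ψ) (idTensor R M φ)
      - D (R × A) inferInstance inferInstance ψ φ ≤ amortChanDiv D N M :=
  le_sSup ⟨R, inferInstance, inferInstance, ψ, φ, hψ, hφ, rfl⟩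

lemma amortChanDiv_nonneg (hD : D.SatisfiesDPI) (h0 : D.unitValue = 0)
    {N M : MatC A →ₗ[ℂ] MatC B} (hN : IsCPTP N) (hM : IsCPTP M) {ω : MatC (R × A)}
    (hω : IsDensity ω) : 0 ≤ amortChanDiv D N M := by
  refine le_trans ?_ (le_amortChanDiv N M hω hω)
  rw [hD.apply_self hω, h0, sub_zero, ← h0]
  exact hD.unitValue_le (hN.idTensor.isDensity hω) (hM.idTensor.isDensity hω)

lemma amortChanDiv_eq_bot_of_unitValue_ne_zero (hD : D.SatisfiesDPI)
    (hadd : D.IsTensorAdditive) (h0 : D.unitValue ≠ 0) {N M : MatC A →ₗ[ℂ] MatC B}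
    (hN : IsCPTP N) (hM : IsCPTP M) : amortChanDiv D N M = ⊥ := by
  refine sSup_eq_bot.mpr ?_
  rintro _ ⟨R, _, _, ψ, φ, hψ, hφ, rfl⟩
  exact apply_sub_apply_eq_bot_of_unitValue_ne_zero hD hadd h0
    (hN.idTensor.isDensity hψ) (hM.idTensor.isDensity hφ) hψ hφ

end Amortized

section Additivity

open StateDiv

variable {D : StateDiv} {A₁ B₁ A₂ B₂ : Type} [Fintype A₁] [DecidableEq A₁] [Fintype B₁]
  [DecidableEq B₁] [Fintype A₂] [DecidableEq A₂] [Fintype B₂] [DecidableEq B₂]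
  {N₁ M₁ : MatC A₁ →ₗ[ℂ] MatC B₁} {N₂ M₂ : MatC A₂ →ₗ[ℂ] MatC B₂}

lemma amortChanDiv_tensorChan_le (hD : D.SatisfiesDPI) (h0 : D.unitValue = 0)
    (hN₁ : IsCPTP N₁) (hM₁ : IsCPTP M₁) (hN₂ : IsCPTP N₂) (hM₂ : IsCPTP M₂) :
    amortChanDiv D (tensorChan N₁ N₂) (tensorChan M₁ M₂)
      ≤ amortChanDiv D N₁ M₁ + amortChanDiv D N₂ M₂ := by
  refine sSup_le ?_
  rintro _ ⟨R, _, _, ψ, φ, hψ, hφ, rfl⟩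
  -- `N₂` acts first with reference `R × A₁`, then `N₁` with reference `R × B₂`.
  have hψ₀ := (IsCPTP.reindexMap (Equiv.prodAssoc R A₁ A₂).symm).isDensity hψ
  have hφ₀ := (IsCPTP.reindexMap (Equiv.prodAssoc R A₁ A₂).symm).isDensity hφ
  have hψ₁ := (IsCPTP.reindexMap (Equiv.prodRightComm R A₁ B₂)).isDensity
    (hN₂.idTensor.isDensity hψ₀)
  have hφ₁ := (IsCPTP.reindexMap (Equiv.prodRightComm R A₁ B₂)).isDensity
    (hM₂.idTensor.isDensity hφ₀)
  have hstep₂ := le_amortChanDiv (D := D) N₂ M₂ hψ₀ hφ₀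
  have hstep₁ := le_amortChanDiv (D := D) N₁ M₁ hψ₁ hφ₁
  rw [hD.apply_reindexMap _ (hN₂.idTensor.isDensity hψ₀) (hM₂.idTensor.isDensity hφ₀)]
    at hstep₁
  rw [idTensor_tensorChan, idTensor_tensorChan, hD.apply_reindexMap _
      (hN₁.idTensor.isDensity hψ₁) (hM₁.idTensor.isDensity hφ₁), 
    ← hD.apply_reindexMap (Equiv.prodAssoc R A₁ A₂).symm hψ hφ]
  have hbot : D.unitValue ≠ ⊥ := h0 ▸ EReal.zero_ne_bot
  exact EReal.sub_le_add_of_sub_le_of_sub_le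
    (hD.apply_ne_bot hbot (hN₂.idTensor.isDensity hψ₀) (hM₂.idTensor.isDensity hφ₀))
    (ne_bot_of_le_ne_bot EReal.zero_ne_bot (amortChanDiv_nonneg hD h0 hN₁ hM₁ hψ₁))
    hstep₁ hstep₂

lemma add_le_amortChanDiv_tensorChan (hD : D.SatisfiesDPI) (hadd : D.IsTensorAdditive)
    (hbot : D.unitValue ≠ ⊥)
    (hN₁ : IsCPTP N₁) (hM₁ : IsCPTP M₁) (hN₂ : IsCPTP N₂) (hM₂ : IsCPTP M₂) :
    amortChanDiv D N₁ M₁ + amortChanDiv D N₂ M₂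
      ≤ amortChanDiv D (tensorChan N₁ N₂) (tensorChan M₁ M₂) := by
  refine EReal.sSup_add_sSup_le ?_
  rintro _ ⟨R₁, _, _, ψ₁, φ₁, hψ₁, hφ₁, rfl⟩ _ ⟨R₂, _, _, ψ₂, φ₂, hψ₂, hφ₂, rfl⟩
  have h := le_amortChanDiv (D := D) (tensorChan N₁ N₂) (tensorChan M₁ M₂)
    ((IsCPTP.reindexMap (Equiv.prodProdProdComm R₁ A₁ R₂ A₂)).isDensity (hψ₁.kronecker hψ₂))
    ((IsCPTP.reindexMap (Equiv.prodProdProdComm R₁ A₁ R₂ A₂)).isDensity (hφ₁.kronecker hφ₂))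
  rw [idTensor_tensorChan_kronecker, idTensor_tensorChan_kronecker,
    hD.apply_reindexMap _ ((hN₁.idTensor.isDensity hψ₁).kronecker (hN₂.idTensor.isDensity hψ₂))
      ((hM₁.idTensor.isDensity hφ₁).kronecker (hM₂.idTensor.isDensity hφ₂)),
    hD.apply_reindexMap _ (hψ₁.kronecker hψ₂) (hφ₁.kronecker hφ₂),
    hadd.apply_kronecker (hN₁.idTensor.isDensity hψ₁) (hM₁.idTensor.isDensity hφ₁)
      (hN₂.idTensor.isDensity hψ₂) (hM₂.idTensor.isDensity hφ₂),
    hadd.apply_kronecker hψ₁ hφ₁ hψ₂ hφ₂,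
    EReal.add_sub_add_comm (Or.inl (hD.apply_ne_bot hbot hψ₁ hφ₁))
      (Or.inr (hD.apply_ne_bot hbot hψ₂ hφ₂))] at h
  exact h

end Additivity
theorem stmt7 (D : StateDiv)
    (hdpi : ∀ (ι₁ ι₂ : Type) (f₁ : Fintype ι₁) (d₁ : DecidableEq ι₁)
        (f₂ : Fintype ι₂) (d₂ : DecidableEq ι₂) (E : MatC ι₁ →ₗ[ℂ] MatC ι₂),
      letI := f₁; letI := d₁; letI := f₂; letI := d₂;
      IsCPTP E → ∀ ρ σ : MatC ι₁, IsDensity ρ → IsDensity σ →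
        D ι₂ f₂ d₂ (E ρ) (E σ) ≤ D ι₁ f₁ d₁ ρ σ)
    (hadd : ∀ (ι₁ ι₂ : Type) (f₁ : Fintype ι₁) (d₁ : DecidableEq ι₁)
        (f₂ : Fintype ι₂) (d₂ : DecidableEq ι₂) (ρ₁ σ₁ : MatC ι₁) (ρ₂ σ₂ : MatC ι₂),
      letI := f₁; letI := d₁; letI := f₂; letI := d₂;
      IsDensity ρ₁ → IsDensity σ₁ → IsDensity ρ₂ → IsDensity σ₂ →
        D (ι₁ × ι₂) inferInstance inferInstance (ρ₁ ⊗ₖ ρ₂) (σ₁ ⊗ₖ σ₂) =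
          D ι₁ f₁ d₁ ρ₁ σ₁ + D ι₂ f₂ d₂ ρ₂ σ₂)
    {A₁ B₁ A₂ B₂ : Type} [Fintype A₁] [DecidableEq A₁] [Fintype B₁] [DecidableEq B₁]
    [Fintype A₂] [DecidableEq A₂] [Fintype B₂] [DecidableEq B₂]
    (N₁ M₁ : MatC A₁ →ₗ[ℂ] MatC B₁) (N₂ M₂ : MatC A₂ →ₗ[ℂ] MatC B₂)
    (hN₁ : IsCPTP N₁) (hM₁ : IsCPTP M₁) (hN₂ : IsCPTP N₂) (hM₂ : IsCPTP M₂) :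
    amortChanDiv D (tensorChan N₁ N₂) (tensorChan M₁ M₂) =
      amortChanDiv D N₁ M₁ + amortChanDiv D N₂ M₂ := by
  by_cases h0 : D.unitValue = 0
  · exact le_antisymm (amortChanDiv_tensorChan_le hdpi h0 hN₁ hM₁ hN₂ hM₂)
      (add_le_amortChanDiv_tensorChan hdpi hadd (h0 ▸ EReal.zero_ne_bot) hN₁ hM₁ hN₂ hM₂)
  · rw [amortChanDiv_eq_bot_of_unitValue_ne_zero hdpi hadd h0 (hN₁.tensorChan hN₂)
        (hM₁.tensorChan hM₂), amortChanDiv_eq_bot_of_unitValue_ne_zero hdpi hadd h0 hN₁ hM₁,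
      EReal.bot_add]

end
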